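/- Let $\mathcal{P}_- \subseteq \mathcal{P}_+$ be two finite sets of points in the plane with pairwise distinct $x$- and $y$-coordinates, and let $\mathcal{C}$ be a chain of maximal size in $\mathrm{BST}(\mathcal{P}_+)$. Then the height of $\mathrm{BST}(\mathcal{P}_-)$ is at least the height of $\mathrm{BST}(\mathcal{P}_+)$ minus $|\mathcal{C} \cap (\mathcal{P}_+ \setminus \mathcal{P}_-)|$. In particular, removing a single point from a point set decreases the BST height by at most 1. -/

import Mathlib

/-- Binary trees with real labels. -/
inductive BTree where
  | leaf : BTree
  | node : BTree → ℝ → BTree → BTree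

namespace BTree

/-- Insertion of a value into a binary search tree. -/
noncomputable def insert (x : ℝ) : BTree → BTree
  | leaf => node leaf x leaf
  | node l y r => if x < y then node (insert x l) y r else node l y (insert x r)

/-- Number of nodes. -/
def size : BTree → ℕ
  | leaf => 0
  | node l _ r => size l + 1 + size r

/-- Number of nodes on a longest root-to-leaf path. -/
def depth : BTree → ℕ
  | leaf => 0
  | node l _ r => 1 + max (depth l) (depth r)

/-- Height: maximal number of edges from the root to a leaf (`-1` for the empty tree). -/
def height (t : BTree) : ℤ := (depth t : ℤ) - 1

/-- The value `x` is a label of the tree. -/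
def Mem (x : ℝ) : BTree → Prop
  | leaf => False
  | node l y r => x = y ∨ Mem x l ∨ Mem x r

/-- The node labeled `a` is a (strict) ancestor of the node labeled `b`. -/
def IsAncestor (a b : ℝ) : BTree → Prop
  | leaf => False
  | node l y r => (a = y ∧ (Mem b l ∨ Mem b r)) ∨ IsAncestor a b l ∨ IsAncestor a b r

/-- A set of labels is a chain if any two of its nodes are comparable for the
ancestor relation. -/
def IsChain (t : BTree) (C : Set ℝ) : Prop :=
  ∀ a ∈ C, ∀ b ∈ C, a = b ∨ IsAncestor a b t ∨ IsAncestor b a t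

end BTree

/-- The binary search tree obtained by inserting the elements of a list in order. -/
noncomputable def bstOfList (l : List ℝ) : BTree := l.foldl (fun t x => t.insert x) .leaf

/-- The BST of a list of planar points, already sorted by increasing `x`-coordinate:
insert the `y`-coordinates in order. -/
noncomputable def bstOfSortedPts (l : List (ℝ × ℝ)) : BTree := bstOfList (l.map Prod.snd)

open scoped Classical in
/-- The BST of a finite set of planar points, given as a list: sort the points by
increasing `x`-coordinate and insert the `y`-coordinates in this order. -/
noncomputable def bstOfPts (l : List (ℝ × ℝ)) : BTree :=
  bstOfSortedPts (l.mergeSort (fun p q => decide (p.1 ≤ q.1)))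

open scoped Classical in
/-- Length of a longest increasing subsequence of `f`. -/
noncomputable def lisLen {n : ℕ} {β : Type*} [Preorder β] (f : Fin n → β) : ℕ :=
  Finset.univ.sup fun s : Finset (Fin n) => if StrictMonoOn f ↑s then s.card else 0

open scoped Classical in
/-- Length of a longest decreasing subsequence of `f`. -/
noncomputable def ldsLen {n : ℕ} {β : Type*} [Preorder β] (f : Fin n → β) : ℕ :=
  Finset.univ.sup fun s : Finset (Fin n) => if StrictAntiOn f ↑s then s.card else 0

/-!
A longest root-to-leaf path of a search tree is a chain with `depth` nodes, and no chain has
more: after removing the root, a chain lies in one subtree, because a key of the left subtree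
is never comparable with one of the right subtree. So a maximum chain `𝒞` of `BST(P₊)` has
`h(BST(P₊)) + 1` nodes. Deleting keys does not break ancestry among the remaining ones:
`a` is an ancestor of `b` exactly when `b` is inserted after `a`, and `a` before every other
key lying between `a` and `b`. Hence `𝒞 ∩ P₋` is a chain of `BST(P₋)`, whose height is
therefore at least `|𝒞 ∩ P₋| - 1 = h(BST(P₊)) - |𝒞 \ P₋|`.
-/

namespace BTree

def IsSearchTree : BTree → Prop
  | leaf => True
  | node l y r =>
    (∀ z, Mem z l → z < y) ∧ (∀ z, Mem z r → y < z) ∧ IsSearchTree l ∧ IsSearchTree r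

theorem mem_insert {x z : ℝ} {t : BTree} : Mem z (t.insert x) ↔ z = x ∨ Mem z t := by
  induction t with
  | leaf => simp [BTree.insert, Mem]
  | node l y r ihl ihr =>
    simp only [BTree.insert]
    split_ifs <;> simp only [Mem, ihl, ihr] <;> tauto

theorem IsSearchTree.insert {x : ℝ} {t : BTree} (ht : t.IsSearchTree) (hx : ¬ Mem x t) :
    (t.insert x).IsSearchTree := by
  induction t with
  | leaf => simp [BTree.insert, IsSearchTree, Mem]
  | node l y r ihl ihr =>
    obtain ⟨hl, hr, htl, htr⟩ := ht
    simp only [Mem, not_or] at hx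
    simp only [BTree.insert]
    split_ifs with hxy
    · refine ⟨fun z hz => ?_, hr, ihl htl hx.2.1, htr⟩
      rcases mem_insert.1 hz with rfl | hz
      exacts [hxy, hl z hz]
    · refine ⟨hl, fun z hz => ?_, htl, ihr htr hx.2.2⟩
      rcases mem_insert.1 hz with rfl | hz
      exacts [lt_of_le_of_ne (not_lt.1 hxy) (Ne.symm hx.1), hr z hz]

theorem IsAncestor.mem_left {a b : ℝ} {t : BTree} (h : IsAncestor a b t) : Mem a t := by
  induction t with
  | leaf => exact h.elim
  | node l y r ihl ihr =>
    rcases h with ⟨rfl, -⟩ | h | h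
    exacts [Or.inl rfl, Or.inr (Or.inl (ihl h)), Or.inr (Or.inr (ihr h))]

theorem IsAncestor.mem_right {a b : ℝ} {t : BTree} (h : IsAncestor a b t) : Mem b t := by
  induction t with
  | leaf => exact h.elim
  | node l y r ihl ihr =>
    rcases h with ⟨-, hb⟩ | h | h
    exacts [Or.inr hb, Or.inr (Or.inl (ihl h)), Or.inr (Or.inr (ihr h))]

theorem IsSearchTree.isAncestor_node_iff_of_mem_left {l r : BTree} {y a b : ℝ}
    (ht : (node l y r).IsSearchTree) (ha : Mem a l) :
    IsAncestor a b (node l y r) ↔ IsAncestor a b l := by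
  obtain ⟨hl, hr, -, -⟩ := ht
  refine ⟨fun h => ?_, fun h => Or.inr (Or.inl h)⟩
  rcases h with ⟨rfl, -⟩ | h | h
  · exact absurd (hl a ha) (lt_irrefl a)
  · exact h
  · exact absurd (hl a ha) (hr a h.mem_left).asymm

theorem IsSearchTree.isAncestor_node_iff_of_mem_right {l r : BTree} {y a b : ℝ}
    (ht : (node l y r).IsSearchTree) (ha : Mem a r) :
    IsAncestor a b (node l y r) ↔ IsAncestor a b r := by
  obtain ⟨hl, hr, -, -⟩ := ht
  refine ⟨fun h => ?_, fun h => Or.inr (Or.inr h)⟩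
  rcases h with ⟨rfl, -⟩ | h | h
  · exact absurd (hr a ha) (lt_irrefl a)
  · exact absurd (hr a ha) (hl a h.mem_left).asymm
  · exact h

theorem IsChain.mono {t : BTree} {C D : Set ℝ} (h : IsChain t C) (hDC : D ⊆ C) :
    IsChain t D :=
  fun a ha b hb => h a (hDC ha) b (hDC hb)

theorem IsChain.insert {t : BTree} {C : Set ℝ} {y : ℝ} (h : IsChain t C)
    (hy : ∀ b ∈ C, IsAncestor y b t) : IsChain t (Insert.insert y C) := by
  rintro a (rfl | ha) b (rfl | hb)
  · exact Or.inl rfl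
  · exact Or.inr (Or.inl (hy b hb))
  · exact Or.inr (Or.inr (hy a ha))
  · exact h a ha b hb

theorem IsChain.node_left {l r : BTree} {y : ℝ} {C : Set ℝ} (h : IsChain l C) :
    IsChain (node l y r) C :=
  fun a ha b hb => (h a ha b hb).imp_right (Or.imp (Or.inr ∘ Or.inl) (Or.inr ∘ Or.inl))

theorem IsChain.node_right {l r : BTree} {y : ℝ} {C : Set ℝ} (h : IsChain r C) :
    IsChain (node l y r) C :=
  fun a ha b hb => (h a ha b hb).imp_right (Or.imp (Or.inr ∘ Or.inr) (Or.inr ∘ Or.inr))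

theorem IsSearchTree.card_le_depth_of_isChain {t : BTree} (ht : t.IsSearchTree) {S : Finset ℝ}
    (hS : ∀ a ∈ S, Mem a t) (hch : IsChain t S) : S.card ≤ t.depth := by
  induction t generalizing S with
  | leaf => simp [Finset.eq_empty_of_forall_notMem hS]
  | node l y r ihl ihr =>
    have hmem : ∀ a ∈ S.erase y, Mem a l ∨ Mem a r := fun a ha =>
      (hS a (Finset.mem_of_mem_erase ha)).resolve_left (Finset.ne_of_mem_erase ha)
    have hch' : IsChain (node l y r) ↑(S.erase y) := hch.mono (by simp)
    have hside : (∀ a ∈ S.erase y, Mem a l) ∨ (∀ a ∈ S.erase y, Mem a r) := by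
      by_contra! ⟨⟨a, ha, hal⟩, ⟨c, hc, hcr⟩⟩
      have har := (hmem a ha).resolve_left hal
      have hcl := (hmem c hc).resolve_right hcr
      rcases hch' a ha c hc with rfl | h | h
      · exact hal hcl
      · exact hcr ((ht.isAncestor_node_iff_of_mem_right har).1 h).mem_right
      · exact hal ((ht.isAncestor_node_iff_of_mem_left hcl).1 h).mem_right
    have herase := Finset.pred_card_le_card_erase (s := S) (a := y)
    rcases hside with hside | hside
    · have := ihl ht.2.2.1 hside fun a ha b hb =>
        (hch' a ha b hb).imp_right <| Or.imp
          (ht.isAncestor_node_iff_of_mem_left (hside a ha)).1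
          (ht.isAncestor_node_iff_of_mem_left (hside b hb)).1
      simp only [depth]; omega
    · have := ihr ht.2.2.2 hside fun a ha b hb =>
        (hch' a ha b hb).imp_right <| Or.imp
          (ht.isAncestor_node_iff_of_mem_right (hside a ha)).1
          (ht.isAncestor_node_iff_of_mem_right (hside b hb)).1
      simp only [depth]; omega

theorem IsSearchTree.exists_isChain_card_eq_depth {t : BTree} (ht : t.IsSearchTree) :
    ∃ S : Finset ℝ, (∀ a ∈ S, Mem a t) ∧ IsChain t S ∧ S.card = t.depth := by
  induction t with
  | leaf => exact ⟨∅, by simp, by simp [IsChain], rfl⟩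
  | node l y r ihl ihr =>
    obtain ⟨hl, hr, htl, htr⟩ := ht
    rcases le_total r.depth l.depth with hlr | hlr
    · obtain ⟨S, hS, hch, hcard⟩ := ihl htl
      refine ⟨Insert.insert y S, ?_, ?_, ?_⟩
      · simp only [Finset.mem_insert, forall_eq_or_imp]
        exact ⟨Or.inl rfl, fun a ha => Or.inr (Or.inl (hS a ha))⟩
      · rw [Finset.coe_insert]
        exact hch.node_left.insert fun b hb => Or.inl ⟨rfl, Or.inl (hS b hb)⟩
      · rw [Finset.card_insert_of_notMem fun hy => lt_irrefl y (hl y (hS y hy)), hcard, depth]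
        omega
    · obtain ⟨S, hS, hch, hcard⟩ := ihr htr
      refine ⟨Insert.insert y S, ?_, ?_, ?_⟩
      · simp only [Finset.mem_insert, forall_eq_or_imp]
        exact ⟨Or.inl rfl, fun a ha => Or.inr (Or.inr (hS a ha))⟩
      · rw [Finset.coe_insert]
        exact hch.node_right.insert fun b hb => Or.inl ⟨rfl, Or.inr (hS b hb)⟩
      · rw [Finset.card_insert_of_notMem fun hy => lt_irrefl y (hr y (hS y hy)), hcard, depth]
        omega

end BTree

section bstOfList

open BTree

theorem List.filter_filter_of_imp {α : Type*} {p q : α → Bool} {L : List α}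
    (h : ∀ z, q z → p z) : (L.filter p).filter q = L.filter q := by
  rw [List.filter_filter]
  exact List.filter_congr fun z _ => by cases hq : q z <;> simp [hq, h z]

theorem mem_foldl_insert {z : ℝ} (L : List ℝ) (t : BTree) :
    Mem z (L.foldl (fun t x => t.insert x) t) ↔ Mem z t ∨ z ∈ L := by
  induction L generalizing t with
  | nil => simp
  | cons x L ih => simp only [List.foldl_cons, ih, mem_insert, List.mem_cons]; tauto

theorem mem_bstOfList {z : ℝ} {L : List ℝ} : Mem z (bstOfList L) ↔ z ∈ L := by
  simp [bstOfList, mem_foldl_insert, Mem]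

theorem isSearchTree_foldl_insert {L : List ℝ} (hL : L.Nodup) {t : BTree}
    (ht : t.IsSearchTree) (hdisj : ∀ z ∈ L, ¬ Mem z t) :
    (L.foldl (fun t x => t.insert x) t).IsSearchTree := by
  induction L generalizing t with
  | nil => exact ht
  | cons x L ih =>
    obtain ⟨hxL, hL⟩ := List.nodup_cons.1 hL
    refine ih hL (ht.insert (hdisj x List.mem_cons_self)) fun z hz hzt => ?_
    rcases mem_insert.1 hzt with rfl | hzt
    exacts [hxL hz, hdisj z (List.mem_cons_of_mem x hz) hzt]

theorem isSearchTree_bstOfList {L : List ℝ} (hL : L.Nodup) : (bstOfList L).IsSearchTree :=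
  isSearchTree_foldl_insert hL trivial fun _ _ h => h

theorem foldl_insert_node (L : List ℝ) (l r : BTree) (y : ℝ) :
    L.foldl (fun t x => t.insert x) (node l y r) =
      node ((L.filter (· < y)).foldl (fun t x => t.insert x) l) y
        ((L.filter (y ≤ ·)).foldl (fun t x => t.insert x) r) := by
  induction L generalizing l r with
  | nil => rfl
  | cons x L ih =>
    by_cases h : x < y
    · simp [h, not_le.2 h, BTree.insert, ih]
    · simp [h, not_lt.1 h, BTree.insert, ih]

theorem bstOfList_cons (x : ℝ) (L : List ℝ) :
    bstOfList (x :: L) = node (bstOfList (L.filter (· < x))) x (bstOfList (L.filter (x ≤ ·))) :=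
  foldl_insert_node L leaf leaf x

open scoped Classical in
theorem isAncestor_bstOfList_iff {a b : ℝ} : ∀ {L : List ℝ}, L.Nodup →
    (IsAncestor a b (bstOfList L) ↔ ∃ R, L.filter (· ∈ Set.uIcc a b) = a :: R ∧ b ∈ R)
  | [], _ => by simp [bstOfList, IsAncestor]
  | x :: L, hL => by
    obtain ⟨hxL, hL⟩ := List.nodup_cons.1 hL
    have hlt {z} (h : Mem z (bstOfList (L.filter (· < x)))) : z ∈ L ∧ z < x := by
      simpa using List.mem_filter.1 (mem_bstOfList.1 h)
    have hge {z} (h : Mem z (bstOfList (L.filter (x ≤ ·)))) : z ∈ L ∧ x ≤ z := by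
      simpa using List.mem_filter.1 (mem_bstOfList.1 h)
    rw [bstOfList_cons]
    by_cases hx : x ∈ Set.uIcc a b
    · rw [List.filter_cons_of_pos (by simpa using hx)]
      constructor
      · rintro (⟨rfl, hb⟩ | h | h)
        · refine ⟨_, rfl, List.mem_filter.2 ⟨?_, by simp⟩⟩
          exact hb.elim (fun h => (hlt h).1) fun h => (hge h).1
        · obtain ⟨⟨-, ha⟩, ⟨-, hb⟩⟩ := And.intro (hlt h.mem_left) (hlt h.mem_right)
          exact absurd hx.2 (not_le.2 (sup_lt_iff.2 ⟨ha, hb⟩))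
        · obtain ⟨⟨haL, ha⟩, ⟨hbL, hb⟩⟩ := And.intro (hge h.mem_left) (hge h.mem_right)
          rcases Set.mem_uIcc.1 hx with hx | hx
          · exact (hxL (le_antisymm ha hx.1 ▸ haL)).elim
          · exact (hxL (le_antisymm hb hx.1 ▸ hbL)).elim
      · rintro ⟨R, hR, hb⟩
        obtain ⟨rfl, rfl⟩ := List.cons.inj hR
        have hbL := (List.mem_filter.1 hb).1
        refine Or.inl ⟨rfl, ?_⟩
        rcases lt_or_ge b x with hbx | hbx
        · exact Or.inl (mem_bstOfList.2 (List.mem_filter.2 ⟨hbL, by simpa using hbx⟩))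
        · exact Or.inr (mem_bstOfList.2 (List.mem_filter.2 ⟨hbL, by simpa using hbx⟩))
    · rw [List.filter_cons_of_neg (by simpa using hx)]
      have hax : a ≠ x := fun h => hx (h ▸ Set.left_mem_uIcc)
      simp only [IsAncestor, hax, false_and, false_or]
      rcases (show a ⊔ b < x ∨ x < a ⊓ b by
        rw [Set.uIcc, Set.mem_Icc, not_and_or, not_le, not_le] at hx; exact hx.symm) with hx | hx
      · rw [or_iff_left fun h => absurd (hge h.mem_left).2 (not_le.2 (le_sup_left.trans_lt hx)),
          isAncestor_bstOfList_iff (hL.filter _), List.filter_filter_of_imp fun z hz => by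
            simpa using (of_decide_eq_true hz).2.trans_lt hx]
      · rw [or_iff_right fun h => absurd (hlt h.mem_left).2 (not_lt.2 (hx.le.trans inf_le_left)),
          isAncestor_bstOfList_iff (hL.filter _), List.filter_filter_of_imp fun z hz => by
            simpa using hx.le.trans (of_decide_eq_true hz).1]
  termination_by L => L.length
  decreasing_by all_goals exact Nat.lt_succ_of_le (List.length_filter_le _ _)

open scoped Classical in
theorem BTree.IsAncestor.bstOfList_of_sublist {a b : ℝ} {L L' : List ℝ} (hL : L.Nodup)
    (hsub : L'.Sublist L) (ha : a ∈ L') (hb : b ∈ L') (h : IsAncestor a b (bstOfList L)) :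
    IsAncestor a b (bstOfList L') := by
  obtain ⟨R, hR, hbR⟩ := (isAncestor_bstOfList_iff hL).1 h
  have haR : a ∉ R := (List.nodup_cons.1 (hR ▸ hL.filter _)).1
  refine (isAncestor_bstOfList_iff (hL.sublist hsub)).2 ?_
  rcases List.sublist_cons_iff.1 (hR ▸ hsub.filter _) with hR' | ⟨R', hR', -⟩
  · exact absurd (hR'.subset (List.mem_filter.2 ⟨ha, by simp⟩)) haR
  · refine ⟨R', hR', ?_⟩
    have hb' : b ∈ a :: R' := hR' ▸ List.mem_filter.2 ⟨hb, by simp⟩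
    exact (List.mem_cons.1 hb').resolve_left fun hba => haR (hba ▸ hbR)

theorem BTree.IsChain.card_le_depth_bstOfList_of_sublist {L L' : List ℝ} (hL : L.Nodup)
    (hsub : L'.Sublist L) {S : Finset ℝ} (hS : ∀ a ∈ S, a ∈ L')
    (h : IsChain (bstOfList L) S) : S.card ≤ (bstOfList L').depth := by
  refine (isSearchTree_bstOfList (hL.sublist hsub)).card_le_depth_of_isChain
    (fun a ha => mem_bstOfList.2 (hS a ha)) fun a ha b hb => ?_
  exact (h a ha b hb).imp_right <| Or.imp
    (IsAncestor.bstOfList_of_sublist hL hsub (hS a ha) (hS b hb))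
    (IsAncestor.bstOfList_of_sublist hL hsub (hS b hb) (hS a ha))

theorem depth_bstOfList_le_of_sublist {L L' : List ℝ} (hL : L.Nodup) (hsub : L'.Sublist L) :
    (bstOfList L).depth ≤ (bstOfList L').depth + (L.length - L'.length) := by
  classical
  obtain ⟨S, hSmem, hch, hcard⟩ := (isSearchTree_bstOfList hL).exists_isChain_card_eq_depth
  have hkept : (S.filter (· ∈ L')).card ≤ (bstOfList L').depth :=
    (hch.mono (Finset.coe_subset.2 (Finset.filter_subset _ _))).card_le_depth_bstOfList_of_sublist
      hL hsub fun a ha => (Finset.mem_filter.1 ha).2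
  have hremoved : (S.filter (· ∉ L')).card ≤ L.length - L'.length := by
    calc (S.filter (· ∉ L')).card ≤ (L.toFinset \ L'.toFinset).card := by
          refine Finset.card_le_card fun a ha => ?_
          obtain ⟨haS, haL'⟩ := Finset.mem_filter.1 ha
          simpa [haL'] using mem_bstOfList.1 (hSmem a haS)
      _ = L.length - L'.length := by
          rw [Finset.card_sdiff_of_subset fun a ha =>
            List.mem_toFinset.2 (hsub.subset (List.mem_toFinset.1 ha)),
            List.toFinset_card_of_nodup hL, List.toFinset_card_of_nodup (hL.sublist hsub)]
  have := Finset.card_filter_add_card_filter_not (s := S) (· ∈ L')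
  omega

end bstOfList

open scoped Classical in
theorem stmt6_general (Pp Pm : List (ℝ × ℝ)) (hsub : Pm.Sublist Pp)
    (hyd : Pp.Pairwise (fun p q => p.2 ≠ q.2))
    (C : Finset (ℝ × ℝ))
    (hCchain : BTree.IsChain (bstOfSortedPts Pp) (Prod.snd '' (C : Set (ℝ × ℝ))))
    (hCmax : ∀ C' : Finset (ℝ × ℝ), (∀ p ∈ C', p ∈ Pp) →
      BTree.IsChain (bstOfSortedPts Pp) (Prod.snd '' (C' : Set (ℝ × ℝ))) →
      C'.card ≤ C.card) :
    (bstOfSortedPts Pp).height - ((C.filter (fun p => p ∉ Pm)).card : ℤ)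
        ≤ (bstOfSortedPts Pm).height
    ∧ (Pp.length = Pm.length + 1 →
        (bstOfSortedPts Pp).height - 1 ≤ (bstOfSortedPts Pm).height) := by
  have hL : (Pp.map Prod.snd).Nodup := List.pairwise_map.2 hyd
  have hsubL : (Pm.map Prod.snd).Sublist (Pp.map Prod.snd) := hsub.map _
  have hinj : Set.InjOn Prod.snd {p | p ∈ Pp} := List.inj_on_of_nodup_map hL
  have hdepth : (bstOfSortedPts Pp).depth ≤ C.card := by
    obtain ⟨S, hSmem, hch, hcard⟩ := (isSearchTree_bstOfList hL).exists_isChain_card_eq_depth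
    obtain ⟨C', hC'Pp, rfl⟩ := Finset.subset_set_image_iff.1 fun a ha =>
      List.mem_map.1 (mem_bstOfList.1 (hSmem a ha))
    rw [bstOfSortedPts, ← hcard, Finset.card_image_of_injOn (hinj.mono hC'Pp)]
    exact hCmax C' hC'Pp (by rwa [← Finset.coe_image])
  have hkept : (C.filter (· ∈ Pm)).card ≤ (bstOfSortedPts Pm).depth := by
    rw [← Finset.card_image_of_injOn
      (hinj.mono fun p hp => hsub.subset (Finset.mem_filter.1 hp).2)]
    refine (hCchain.mono ?_).card_le_depth_bstOfList_of_sublist hL hsubL fun a ha => ?_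
    · simpa using Set.image_mono (Finset.filter_subset _ C)
    · obtain ⟨p, hp, rfl⟩ := Finset.mem_image.1 ha
      exact List.mem_map_of_mem (Finset.mem_filter.1 hp).2
  have hsplit := Finset.card_filter_add_card_filter_not (s := C) (· ∈ Pm)
  refine ⟨by simp only [BTree.height]; omega, fun hlen => ?_⟩
  have := depth_bstOfList_le_of_sublist hL hsubL
  simp only [BTree.height, bstOfSortedPts, List.length_map, hlen] at this ⊢
  omega

open scoped Classical in
/-- **Height comparison for binary search trees of nested point sets.** If `P₋ ⊆ P₊` are
point sets with distinct coordinates (lists sorted by increasing `x`) and `𝒞` is a chain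
of maximal size in `BST(P₊)`, then
`h(BST(P₋)) ≥ h(BST(P₊)) - |𝒞 ∩ (P₊ \ P₋)|`. In particular, removing a single point
decreases the BST height by at most `1`. -/
theorem stmt6 (Pp Pm : List (ℝ × ℝ)) (hsub : Pm.Sublist Pp)
    (hxs : Pp.Pairwise (fun p q => p.1 < q.1))
    (hyd : Pp.Pairwise (fun p q => p.2 ≠ q.2))
    (C : Finset (ℝ × ℝ)) (hCsub : ∀ p ∈ C, p ∈ Pp)
    (hCchain : BTree.IsChain (bstOfSortedPts Pp) (Prod.snd '' (C : Set (ℝ × ℝ))))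
    (hCmax : ∀ C' : Finset (ℝ × ℝ), (∀ p ∈ C', p ∈ Pp) →
      BTree.IsChain (bstOfSortedPts Pp) (Prod.snd '' (C' : Set (ℝ × ℝ))) →
      C'.card ≤ C.card) :
    (bstOfSortedPts Pp).height - ((C.filter (fun p => p ∉ Pm)).card : ℤ)
        ≤ (bstOfSortedPts Pm).height
    ∧ (Pp.length = Pm.length + 1 →
        (bstOfSortedPts Pp).height - 1 ≤ (bstOfSortedPts Pm).height) :=
  stmt6_general Pp Pm hsub hyd C hCchain hCmax
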